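/- Let k₁, k₂, k₃ be nonnegative integers. Define on T = {(r₂,r₃) ∈ ℤ≥0 × ℤ≥0 : r₂ ≤ k₁, r₃ ≤ r₂ + k₂} the statistics area(r₂,r₃) = r₂ + r₃ and bounce(r₂,r₃) = 2(k₁ − r₂) + r₂ + k₂ − r₃ − min(r₂,k₂) if r₂ + k₂ − r₃ ≥ 2·min(r₂,k₂), and bounce(r₂,r₃) = 2(k₁ − r₂) + ⌈(r₂ + k₂ − r₃)/2⌉ otherwise. Then ∑_{(r₂,r₃)∈T} q^{area} t^{bounce} = ∑_{(r₂,r₃)∈T} t^{area} q^{bounce}. -/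
import Mathlib

private lemma ceil_half (d : ℤ) : ⌈((d : ℚ)) / 2⌉ = (d + 1) / 2 := by
  rcases Int.even_or_odd d with ⟨m, hm⟩ | ⟨m, hm⟩
  · subst hm
    have h : ((m + m : ℤ) : ℚ) / 2 = ((m : ℤ) : ℚ) := by push_cast; ring
    rw [h, Int.ceil_intCast]; omega
  · subst hm
    have h : ((2 * m + 1 : ℤ) : ℚ) / 2 = (1 / 2 : ℚ) + ((m : ℤ) : ℚ) := by push_cast; ring
    have h1 : ⌈(1 / 2 : ℚ)⌉ = 1 := by
      rw [Int.ceil_eq_iff] <;> norm_num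
    rw [h, Int.ceil_add_intCast, h1]
    omega

private def sInv (k2 r2 r3 : ℤ) : ℤ := min (min r2 k2) ((r2 + k2 - r3) / 2)

private def phi2 (k1 k2 r2 r3 : ℤ) : ℤ :=
  if sInv k2 r2 r3 < k2 then
    sInv k2 r2 r3 + max 0 ((2 * k1 + k2 - sInv k2 r2 r3 - (r2 + r3) - k2 + 1) / 2)
  else
    min k1 (2 * k1 + k2 - sInv k2 r2 r3 - (r2 + r3)) + k2 + max 0 ((r2 + r3 - k2 + 1) / 2) - r2

private def phi3 (k1 k2 r2 r3 : ℤ) : ℤ :=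
  2 * k1 + k2 - sInv k2 r2 r3 - (r2 + r3) - phi2 k1 k2 r2 r3

private lemma key1 (k1 k2 r2 r3 : ℤ) (hk2 : 0 ≤ k2) (h1 : 0 ≤ r2) (h2 : r2 ≤ k1)
    (h3 : 0 ≤ r3) (h4 : r3 ≤ r2 + k2) :
    0 ≤ phi2 k1 k2 r2 r3 ∧ phi2 k1 k2 r2 r3 ≤ k1 ∧ 0 ≤ phi3 k1 k2 r2 r3 ∧
      phi3 k1 k2 r2 r3 ≤ phi2 k1 k2 r2 r3 + k2 := by
  simp only [phi2, phi3, sInv]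
  split_ifs <;> omega

private lemma key2 (k1 k2 r2 r3 : ℤ) (hk2 : 0 ≤ k2) (h1 : 0 ≤ r2) (h2 : r2 ≤ k1)
    (h3 : 0 ≤ r3) (h4 : r3 ≤ r2 + k2) :
    sInv k2 (phi2 k1 k2 r2 r3) (phi3 k1 k2 r2 r3) = sInv k2 r2 r3 := by
  simp only [phi2, phi3, sInv]
  split_ifs <;> omega

private lemma hsum (k1 k2 r2 r3 : ℤ) :
    phi2 k1 k2 r2 r3 + phi3 k1 k2 r2 r3 = 2 * k1 + k2 - sInv k2 r2 r3 - (r2 + r3) := by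
  rw [phi3]; ring

private lemma key3 (k1 k2 r2 r3 : ℤ) (hk2 : 0 ≤ k2) (h1 : 0 ≤ r2) (h2 : r2 ≤ k1)
    (h3 : 0 ≤ r3) (h4 : r3 ≤ r2 + k2) :
    phi2 k1 k2 (phi2 k1 k2 r2 r3) (phi3 k1 k2 r2 r3) = r2 := by
  have hs := key2 k1 k2 r2 r3 hk2 h1 h2 h3 h4
  conv_lhs => rw [phi2]
  rw [hs, hsum]
  simp only [phi2, sInv]
  split_ifs <;> omega

private lemma key4 (k1 k2 r2 r3 : ℤ) (hk2 : 0 ≤ k2) (h1 : 0 ≤ r2) (h2 : r2 ≤ k1)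
    (h3 : 0 ≤ r3) (h4 : r3 ≤ r2 + k2) :
    phi3 k1 k2 (phi2 k1 k2 r2 r3) (phi3 k1 k2 r2 r3) = r3 := by
  have hs := key2 k1 k2 r2 r3 hk2 h1 h2 h3 h4
  conv_lhs => rw [phi3]
  rw [hs, hsum, key3 k1 k2 r2 r3 hk2 h1 h2 h3 h4]
  simp only [sInv]
  omega

private lemma bounce_eq (k1 k2 r2 r3 : ℤ) (h1 : 0 ≤ r2) (h3 : 0 ≤ r3) (h4 : r3 ≤ r2 + k2) :
    (if 2 * min r2 k2 ≤ r2 + k2 - r3 then 2 * (k1 - r2) + r2 + k2 - r3 - min r2 k2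
     else 2 * (k1 - r2) + (r2 + k2 - r3 + 1) / 2)
      = 2 * k1 + k2 - sInv k2 r2 r3 - (r2 + r3) := by
  simp only [sInv]
  split_ifs <;> omega

private def pmap (k1 k2 : ℕ) (x : Σ _ : ℕ, ℕ) : Σ _ : ℕ, ℕ :=
  ⟨(phi2 k1 k2 x.1 x.2).toNat, (phi3 k1 k2 x.1 x.2).toNat⟩

theorem stmt_15 (k1 k2 k3 : ℕ) (q t : ℚ) :
    (∑ r2 ∈ Finset.range (k1 + 1), ∑ r3 ∈ Finset.range (r2 + k2 + 1),
        q ^ ((r2 : ℤ) + r3) *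
          t ^ (if 2 * min (r2 : ℤ) (k2 : ℤ) ≤ (r2 : ℤ) + k2 - r3 then
                 2 * ((k1 : ℤ) - r2) + r2 + k2 - r3 - min (r2 : ℤ) (k2 : ℤ)
               else 2 * ((k1 : ℤ) - r2) + ⌈(((r2 : ℤ) + k2 - r3 : ℤ) : ℚ) / 2⌉)) =
      ∑ r2 ∈ Finset.range (k1 + 1), ∑ r3 ∈ Finset.range (r2 + k2 + 1),
        t ^ ((r2 : ℤ) + r3) *
          q ^ (if 2 * min (r2 : ℤ) (k2 : ℤ) ≤ (r2 : ℤ) + k2 - r3 then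
                 2 * ((k1 : ℤ) - r2) + r2 + k2 - r3 - min (r2 : ℤ) (k2 : ℤ)
               else 2 * ((k1 : ℤ) - r2) + ⌈(((r2 : ℤ) + k2 - r3 : ℤ) : ℚ) / 2⌉) := by
  rw [Finset.sum_sigma', Finset.sum_sigma']
  refine Finset.sum_nbij' (pmap k1 k2) (pmap k1 k2) ?_ ?_ ?_ ?_ ?_
  · rintro ⟨r2, r3⟩ hx
    simp only [Finset.mem_sigma, Finset.mem_range] at hx ⊢
    have hk := key1 k1 k2 r2 r3 (by positivity) (by positivity) (by omega)
      (by positivity) (by push_cast; omega)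
    simp only [pmap]
    omega
  · rintro ⟨r2, r3⟩ hx
    simp only [Finset.mem_sigma, Finset.mem_range] at hx ⊢
    have hk := key1 k1 k2 r2 r3 (by positivity) (by positivity) (by omega)
      (by positivity) (by push_cast; omega)
    simp only [pmap]
    omega
  · rintro ⟨r2, r3⟩ hx
    simp only [Finset.mem_sigma, Finset.mem_range] at hx
    have hb2 : (r2 : ℤ) ≤ k1 := by push_cast; omega
    have hb3 : (r3 : ℤ) ≤ r2 + k2 := by push_cast; omega
    have hk := key1 k1 k2 r2 r3 (by positivity) (by positivity) hb2 (by positivity) hb3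
    simp only [pmap]
    have e2 : ((((phi2 k1 k2 r2 r3).toNat : ℕ) : ℤ)) = phi2 k1 k2 r2 r3 := by omega
    have e3 : ((((phi3 k1 k2 r2 r3).toNat : ℕ) : ℤ)) = phi3 k1 k2 r2 r3 := by omega
    simp only [e2, e3, key3 k1 k2 r2 r3 (by positivity) (by positivity) hb2 (by positivity) hb3,
      key4 k1 k2 r2 r3 (by positivity) (by positivity) hb2 (by positivity) hb3]
    simp
  · rintro ⟨r2, r3⟩ hx
    simp only [Finset.mem_sigma, Finset.mem_range] at hx
    have hb2 : (r2 : ℤ) ≤ k1 := by push_cast; omega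
    have hb3 : (r3 : ℤ) ≤ r2 + k2 := by push_cast; omega
    have hk := key1 k1 k2 r2 r3 (by positivity) (by positivity) hb2 (by positivity) hb3
    simp only [pmap]
    have e2 : ((((phi2 k1 k2 r2 r3).toNat : ℕ) : ℤ)) = phi2 k1 k2 r2 r3 := by omega
    have e3 : ((((phi3 k1 k2 r2 r3).toNat : ℕ) : ℤ)) = phi3 k1 k2 r2 r3 := by omega
    simp only [e2, e3, key3 k1 k2 r2 r3 (by positivity) (by positivity) hb2 (by positivity) hb3,
      key4 k1 k2 r2 r3 (by positivity) (by positivity) hb2 (by positivity) hb3]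
    simp
  · rintro ⟨r2, r3⟩ hx
    simp only [Finset.mem_sigma, Finset.mem_range] at hx
    have hb2 : (r2 : ℤ) ≤ k1 := by push_cast; omega
    have hb3 : (r3 : ℤ) ≤ r2 + k2 := by push_cast; omega
    have hk := key1 k1 k2 r2 r3 (by positivity) (by positivity) hb2 (by positivity) hb3
    simp only [pmap, ceil_half]
    have e2 : ((((phi2 k1 k2 r2 r3).toNat : ℕ) : ℤ)) = phi2 k1 k2 r2 r3 := by omega
    have e3 : ((((phi3 k1 k2 r2 r3).toNat : ℕ) : ℤ)) = phi3 k1 k2 r2 r3 := by omega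
    rw [e2, e3, bounce_eq (k1 : ℤ) (k2 : ℤ) r2 r3 (by positivity) (by positivity) hb3,
      bounce_eq (k1 : ℤ) (k2 : ℤ) _ _ hk.1 hk.2.2.1 hk.2.2.2,
      key2 k1 k2 r2 r3 (by positivity) (by positivity) hb2 (by positivity) hb3, hsum]
    have : 2 * (k1 : ℤ) + k2 - sInv k2 r2 r3
          - (2 * k1 + k2 - sInv k2 r2 r3 - (r2 + r3)) = r2 + r3 := by ring
    rw [this, mul_comm]
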